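/- arXiv:2303.12897 — 2 statements merged into one kernel-verified Lean document; each statement's English description precedes it below -/
import Mathlib

section
/- Set ρ(z) = ∏ᵢ pᵢ(z), ρ̂(z) = Σᵢ cᵢ pᵢ′(z) ∏_{l≠i} p_l(z), D = deg ρ, and define the operator (Lf)(z) = ρ(z) f′(z) + ρ̂(z) f(z). Write c−1⃗ for the exponent vector (c₁−1, …, c_N−1). Then L maps polynomials of degree n to polynomials of degree at most n+D−1, and L is banded with bandwidth D+1 in the generalized Jacobi hierarchy: ∫_{−1}^{1} w^{(a+1,b+1,c−1⃗)}(z) · (L P_n^{(a,b,c)})(z) · P_m^{(a+1,b+1,c−1⃗)}(z) dz = 0 unless n−1 ≤ m ≤ n−1+D. -/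
open MeasureTheory Polynomial

/-- The generalized Jacobi weight `(1-z)^a (1+z)^b p₁(z)^{c₁} ⋯ p_N(z)^{c_N}`. -/
noncomputable def gjWeight (a b : ℝ) {N : ℕ} (c : Fin N → ℝ) (p : Fin N → Polynomial ℝ)
    (z : ℝ) : ℝ :=
  (1 - z) ^ a * (1 + z) ^ b * ∏ i, (p i).eval z ^ (c i)

/-- `P` is the sequence of orthonormal polynomials for the weight `w` on `(-1,1)`:
`deg P_k = k`, positive leading coefficients, and `⟨P_j, P_k⟩ = δ_{jk}`. -/
def IsONPolys (w : ℝ → ℝ) (P : ℕ → Polynomial ℝ) : Prop :=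
  (∀ k, (P k).degree = k) ∧ (∀ k, 0 < (P k).leadingCoeff) ∧
    ∀ j k, (∫ z in Set.Ioo (-1 : ℝ) 1, w z * (P j).eval z * (P k).eval z)
      = if j = k then (1 : ℝ) else 0

/-! With `Φ = w^{(a+1,b+1,c)}` one has `Φ = ρ · w^{(a+1,b+1,c-1)} = (1 - z²) · w^{(a,b,c)}` and
`Φ' = ρ̂ · w^{(a+1,b+1,c-1)} + (b - a - (a+b+2) z) · w^{(a,b,c)}`. Since `a, b > -1`, `Φ` vanishes
at `±1`, so integrating `(Φ f g)'` over `(-1, 1)` moves `L` onto the other factor: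
`∫ w^{(a+1,b+1,c-1)} (L f) g = -∫ w^{(a,b,c)} f ((b - a - (a+b+2) z) g + (1 - z²) g')`.
For `g = P'_m` the last factor has degree at most `m + 1`, so the entry vanishes when `m + 2 ≤ n`
by orthogonality of `P_n`. Conversely `deg ρ̂ < deg ρ = D` gives `deg (L P_n) < n + D`, so the
entry vanishes when `m ≥ n + D` by orthogonality of `P'_m`. -/

noncomputable def rhoHat {N : ℕ} (c : Fin N → ℝ) (p : Fin N → ℝ[X]) : ℝ[X] :=
  ∑ i, C (c i) * derivative (p i) * ∏ l ∈ Finset.univ.erase i, p l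

theorem degree_rhoHat_lt {N : ℕ} (c : Fin N → ℝ) {p : Fin N → ℝ[X]} (hp : ∀ i, p i ≠ 0) :
    (rhoHat c p).degree < (∏ i, p i).degree := by
  have hρ : (∏ i, p i) ≠ 0 := Finset.prod_ne_zero_iff.2 fun i _ => hp i
  refine (degree_sum_le _ _).trans_lt <|
    (Finset.sup_lt_iff (bot_lt_iff_ne_bot.2 (degree_ne_bot.2 hρ))).2 fun i _ => ?_
  have hrest : (∏ l ∈ Finset.univ.erase i, p l) ≠ 0 := Finset.prod_ne_zero_iff.2 fun l _ => hp l
  calc (C (c i) * derivative (p i) * ∏ l ∈ Finset.univ.erase i, p l).degree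
      ≤ (derivative (p i) * ∏ l ∈ Finset.univ.erase i, p l).degree := by
        rw [mul_assoc, ← smul_eq_C_mul]; exact degree_smul_le _ _
    _ < (p i * ∏ l ∈ Finset.univ.erase i, p l).degree := by
        rw [degree_mul, degree_mul]
        exact WithBot.add_lt_add_right (degree_ne_bot.2 hrest) (degree_derivative_lt (hp i))
    _ = (∏ l, p l).degree := by rw [Finset.mul_prod_erase _ _ (Finset.mem_univ i)]

theorem degree_mul_derivative_add_mul_lt {R : Type*} [Semiring R] [NoZeroDivisors R]
    {ρ σ : R[X]} (hρ : ρ ≠ 0) (hσ : σ.degree < ρ.degree) (f : R[X]) : (ρ * derivative f + σ * f).degree < (f.natDegree + ρ.natDegree : ℕ) := by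
  rcases eq_or_ne f 0 with rfl | hf
  · simp
  rw [Nat.cast_add, ← degree_eq_natDegree hf, ← degree_eq_natDegree hρ]
  refine (degree_add_le _ _).trans_lt (max_lt ?_ ?_)
  · rw [degree_mul, add_comm]
    exact WithBot.add_lt_add_right (degree_ne_bot.2 hρ) (degree_derivative_lt hf)
  · rw [degree_mul, add_comm]
    exact WithBot.add_lt_add_left (degree_ne_bot.2 hf) hσ

noncomputable def gjDiffOp {N : ℕ} (c : Fin N → ℝ) (p : Fin N → ℝ[X]) (f : ℝ[X]) : ℝ[X] :=
  (∏ i, p i) * derivative f + rhoHat c p * f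

noncomputable def gjDiffOpAdjoint (a b : ℝ) (g : ℝ[X]) : ℝ[X] :=
  (C (b - a) - C (a + b + 2) * X) * g + (1 - X ^ 2) * derivative g

theorem natDegree_gjDiffOpAdjoint_le (a b : ℝ) (g : ℝ[X]) :
    (gjDiffOpAdjoint a b g).natDegree ≤ g.natDegree + 1 := by
  have hlin : (C (b - a) - C (a + b + 2) * X).natDegree ≤ 1 := by compute_degree
  have hquad : (1 - X ^ 2 : ℝ[X]).natDegree ≤ 2 := by compute_degree
  refine (natDegree_add_le _ _).trans (max_le ?_ ?_)
  · exact natDegree_mul_le.trans (by omega)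
  · rcases eq_or_ne g.natDegree 0 with hg | hg
    · simp [derivative_of_natDegree_zero hg]
    · have := natDegree_derivative_lt hg
      exact natDegree_mul_le.trans (by omega)

theorem integrableOn_mul_eval_mul_eval {w : ℝ → ℝ} (hw : IntegrableOn w (Set.Ioo (-1) 1))
    (q r : ℝ[X]) : IntegrableOn (fun z => w z * q.eval z * r.eval z) (Set.Ioo (-1) 1) := by
  rw [← integrableOn_Icc_iff_integrableOn_Ioo] at hw
  have := hw.mul_continuousOn (q * r).continuous.continuousOn isCompact_Icc
  simpa only [eval_mul, mul_assoc] using this.mono_set Set.Ioo_subset_Icc_self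

namespace IsONPolys

variable {w : ℝ → ℝ} {P : ℕ → ℝ[X]}

theorem natDegree_eq (h : IsONPolys w P) (k : ℕ) : (P k).natDegree = k :=
  natDegree_eq_of_degree_eq_some (h.1 k)

theorem integrableOn_weight (h : IsONPolys w P) : IntegrableOn w (Set.Ioo (-1) 1) := by
  have hint : IntegrableOn (fun z => w z * (P 0).eval z * (P 0).eval z) (Set.Ioo (-1) 1) :=
    Integrable.of_integral_ne_zero (by rw [h.2.2]; simp)
  have hγ : (P 0).leadingCoeff ≠ 0 := (h.2.1 0).ne'
  rw [eq_C_of_degree_eq_zero (h.1 0)] at hint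
  rw [leadingCoeff, natDegree_eq_of_degree_eq_some (h.1 0)] at hγ
  simp only [eval_C, mul_assoc] at hint
  exact (integrable_mul_const_iff (isUnit_iff_ne_zero.2 (mul_ne_zero hγ hγ)) w).1 hint

theorem integral_mul_eval_eq_zero_of_degree_lt (h : IsONPolys w P) {q : ℝ[X]} {n : ℕ}
    (hq : q.degree < n) : ∫ z in Set.Ioo (-1 : ℝ) 1, w z * q.eval z * (P n).eval z = 0 := by
  suffices ∀ d ≤ n, ∀ q : ℝ[X], q.degree < d →
      ∫ z in Set.Ioo (-1 : ℝ) 1, w z * q.eval z * (P n).eval z = 0 from this n le_rfl q hq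
  intro d
  induction d with
  | zero =>
    intro _ q hq
    simp [degree_eq_bot.1 (by simpa using hq)]
  | succ d ih =>
    intro hd q hq
    set α := q.coeff d / (P d).leadingCoeff
    have hr : (q - C α * P d).degree < d := by
      rw [degree_lt_iff_coeff_zero]
      intro m hm
      rcases hm.eq_or_lt with rfl | hm
      · have hlc : (P d).coeff d = (P d).leadingCoeff := by rw [leadingCoeff, h.natDegree_eq]
        rw [coeff_sub, coeff_C_mul, hlc, div_mul_cancel₀ _ (h.2.1 _).ne', sub_self]
      · rw [coeff_sub, coeff_C_mul, (degree_lt_iff_coeff_zero _ _).1 hq m hm,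
          coeff_eq_zero_of_degree_lt (by rw [h.1 d]; exact_mod_cast hm), mul_zero, sub_zero]
    have hsplit : (fun z => w z * q.eval z * (P n).eval z) =
        fun z => w z * (q - C α * P d).eval z * (P n).eval z +
          α * (w z * (P d).eval z * (P n).eval z) := by
      funext z; simp only [eval_sub, eval_mul, eval_C]; ring
    rw [hsplit, integral_add (integrableOn_mul_eval_mul_eval h.integrableOn_weight _ _)
        ((integrableOn_mul_eval_mul_eval h.integrableOn_weight _ _).const_mul α),
      integral_const_mul, ih (by omega) _ hr, h.2.2, if_neg (by omega), mul_zero, add_zero]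

end IsONPolys

section Weight

variable {N : ℕ} {c : Fin N → ℝ} {p : Fin N → ℝ[X]} {z : ℝ}

theorem prod_eval_rpow_eq_mul_eval_prod (hpz : ∀ i, 0 < (p i).eval z) :
    ∏ i, (p i).eval z ^ c i = (∏ i, (p i).eval z ^ (c i - 1)) * (∏ i, p i).eval z := by
  rw [eval_prod, ← Finset.prod_mul_distrib]
  exact Finset.prod_congr rfl fun i _ => by rw [← Real.rpow_add_one (hpz i).ne', sub_add_cancel]

theorem hasDerivAt_prod_eval_rpow (hpz : ∀ i, 0 < (p i).eval z) :
    HasDerivAt (fun y => ∏ i, (p i).eval y ^ c i)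
      ((∏ i, (p i).eval z ^ (c i - 1)) * (rhoHat c p).eval z) z := by
  have hfac : ∀ i ∈ Finset.univ, HasDerivAt (fun y => (p i).eval y ^ c i)
      ((derivative (p i)).eval z * c i * (p i).eval z ^ (c i - 1)) z := fun i _ =>
    ((p i).hasDerivAt z).rpow_const (Or.inl (hpz i).ne')
  refine (HasDerivAt.fun_finsetProd hfac).congr_deriv ?_
  rw [rhoHat, eval_finsetSum, Finset.mul_sum]
  refine Finset.sum_congr rfl fun i _ => ?_
  have hrest : ∏ j ∈ Finset.univ.erase i, (p j).eval z ^ c j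
      = (∏ j ∈ Finset.univ.erase i, (p j).eval z ^ (c j - 1)) *
          ∏ j ∈ Finset.univ.erase i, (p j).eval z := by
    rw [← Finset.prod_mul_distrib]
    exact Finset.prod_congr rfl fun j _ => by
      rw [← Real.rpow_add_one (hpz j).ne', sub_add_cancel]
  rw [← Finset.mul_prod_erase _ _ (Finset.mem_univ i), smul_eq_mul, hrest, eval_mul, eval_mul,
    eval_C, eval_prod]
  ring

theorem continuousAt_gjWeight {a b : ℝ} (ha : 0 ≤ a) (hb : 0 ≤ b) (c : Fin N → ℝ)
    (hpz : ∀ i, 0 < (p i).eval z) : ContinuousAt (gjWeight a b c p) z := by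
  refine ((ContinuousAt.rpow_const (by fun_prop) (Or.inr ha)).mul
    (ContinuousAt.rpow_const (by fun_prop) (Or.inr hb))).mul ?_
  exact tendsto_finsetProd _ fun i _ =>
    ContinuousAt.rpow_const (p i).continuous.continuousAt (Or.inl (hpz i).ne')

theorem gjWeight_one {a : ℝ} (ha : a ≠ 0) (b : ℝ) (c : Fin N → ℝ) : gjWeight a b c p 1 = 0 := by
  simp [gjWeight, Real.zero_rpow ha]

theorem gjWeight_neg_one (a : ℝ) {b : ℝ} (hb : b ≠ 0) (c : Fin N → ℝ) :
    gjWeight a b c p (-1) = 0 := by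
  simp [gjWeight, Real.zero_rpow hb]

variable {a b : ℝ}

theorem gjWeight_add_one_add_one_eq_mul_eval_prod (hpz : ∀ i, 0 < (p i).eval z) :
    gjWeight (a + 1) (b + 1) c p z
      = gjWeight (a + 1) (b + 1) (fun i => c i - 1) p z * (∏ i, p i).eval z := by
  rw [gjWeight, gjWeight, prod_eval_rpow_eq_mul_eval_prod hpz]
  ring

theorem gjWeight_add_one_add_one_eq_mul (hz : z ∈ Set.Ioo (-1 : ℝ) 1) :
    gjWeight (a + 1) (b + 1) c p z = (1 - z ^ 2) * gjWeight a b c p z := by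
  rw [gjWeight, gjWeight, Real.rpow_add_one (by linarith [hz.2]),
    Real.rpow_add_one (by linarith [hz.1])]
  ring

theorem hasDerivAt_gjWeight_add_one_add_one (hpz : ∀ i, 0 < (p i).eval z)
    (hz : z ∈ Set.Ioo (-1 : ℝ) 1) :
    HasDerivAt (gjWeight (a + 1) (b + 1) c p)
      (gjWeight a b c p z * (b - a - (a + b + 2) * z)
        + gjWeight (a + 1) (b + 1) (fun i => c i - 1) p z * (rhoHat c p).eval z) z := by
  have h1 : 0 < 1 - z := by linarith [hz.2]
  have h2 : 0 < 1 + z := by linarith [hz.1]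
  have hA := ((hasDerivAt_id' z).const_sub 1).rpow_const (p := a + 1) (Or.inl h1.ne')
  have hB := ((hasDerivAt_id' z).const_add 1).rpow_const (p := b + 1) (Or.inl h2.ne')
  refine ((hA.mul hB).mul (hasDerivAt_prod_eval_rpow hpz)).congr_deriv ?_
  simp only [gjWeight, Pi.mul_apply, add_sub_cancel_right]
  rw [prod_eval_rpow_eq_mul_eval_prod hpz, Real.rpow_add_one h1.ne', Real.rpow_add_one h2.ne']
  ring

end Weight

theorem integral_gjDiffOp_mul_eq_neg {N : ℕ} {c : Fin N → ℝ} {p : Fin N → ℝ[X]} {a b : ℝ}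
    (ha : -1 < a) (hb : -1 < b) (hp : ∀ i, ∀ z ∈ Set.Icc (-1 : ℝ) 1, 0 < (p i).eval z)
    (hw : IntegrableOn (gjWeight a b c p) (Set.Ioo (-1) 1))
    (hW : IntegrableOn (gjWeight (a + 1) (b + 1) (fun i => c i - 1) p) (Set.Ioo (-1) 1))
    (f g : ℝ[X]) :
    ∫ z in Set.Ioo (-1 : ℝ) 1,
        gjWeight (a + 1) (b + 1) (fun i => c i - 1) p z * (gjDiffOp c p f).eval z * g.eval z
      = -∫ z in Set.Ioo (-1 : ℝ) 1,
        gjWeight a b c p z * (gjDiffOpAdjoint a b g).eval z * f.eval z := by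
  set F : ℝ → ℝ := fun z => gjWeight (a + 1) (b + 1) c p z * (f * g).eval z
  have hder : ∀ z ∈ Set.Ioo (-1 : ℝ) 1, HasDerivAt F
      (gjWeight (a + 1) (b + 1) (fun i => c i - 1) p z * (gjDiffOp c p f).eval z * g.eval z
        + gjWeight a b c p z * (gjDiffOpAdjoint a b g).eval z * f.eval z) z := by
    intro z hz
    have hpz : ∀ i, 0 < (p i).eval z := fun i => hp i z (Set.Ioo_subset_Icc_self hz)
    refine ((hasDerivAt_gjWeight_add_one_add_one hpz hz).mul ((f * g).hasDerivAt z)).congr_deriv ?_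
    have hρ := gjWeight_add_one_add_one_eq_mul_eval_prod (a := a) (b := b) (c := c) hpz
    have hsq := gjWeight_add_one_add_one_eq_mul (a := a) (b := b) (c := c) (p := p) hz
    simp only [gjDiffOp, gjDiffOpAdjoint, derivative_mul, eval_add, eval_mul, eval_sub, eval_one,
      eval_pow, eval_X, eval_C]
    linear_combination (eval z f * eval z (derivative g)) * hsq
      + (eval z (derivative f) * eval z g) * hρ
  have hF : ∀ z ∈ ({-1, 1} : Set ℝ), ContinuousAt F z ∧ F z = 0 := by
    rintro z (rfl | rfl)
    all_goals
      refine ⟨(continuousAt_gjWeight (by linarith) (by linarith) c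
        fun i => hp i _ (by norm_num)).mul (f * g).continuous.continuousAt, ?_⟩
      simp only [F, gjWeight_one (by linarith : a + 1 ≠ 0), gjWeight_neg_one _
        (by linarith : b + 1 ≠ 0), zero_mul]
  have hint1 := integrableOn_mul_eval_mul_eval hW (gjDiffOp c p f) g
  have hint2 := integrableOn_mul_eval_mul_eval hw (gjDiffOpAdjoint a b g) f
  have hFTC := intervalIntegral.integral_eq_sub_of_hasDerivAt_of_tendsto (by norm_num) hder
    ((intervalIntegrable_iff_integrableOn_Ioo_of_le (by norm_num)).2 (hint1.add hint2))
    ((hF (-1) (by simp)).2 ▸ (hF (-1) (by simp)).1.continuousWithinAt.tendsto)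
    ((hF 1 (by simp)).2 ▸ (hF 1 (by simp)).1.continuousWithinAt.tendsto)
  rw [intervalIntegral.integral_of_le (by norm_num), integral_Ioc_eq_integral_Ioo,
    integral_add hint1 hint2, sub_zero] at hFTC
  linarith

/-- The operator `L f = ρ f' + ρ̂ f` (with `ρ = ∏ᵢ pᵢ`, `ρ̂ = Σᵢ cᵢ pᵢ' ∏_{l≠i} p_l`)
maps degree-`n` polynomials to degree at most `n+D-1` and is banded with bandwidth `D+1`
from the `(a,b,c)` basis to the `(a+1,b+1,c-1⃗)` basis, where `D = deg ρ`:  its matrix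
entries vanish unless `n-1 ≤ m ≤ n-1+D`. -/
theorem statement9 (a b : ℝ) (ha : -1 < a) (hb : -1 < b) (N : ℕ) (c : Fin N → ℝ)
    (p : Fin N → Polynomial ℝ) (hp : ∀ i, ∀ z ∈ Set.Icc (-1 : ℝ) 1, 0 < (p i).eval z)
    (P P' : ℕ → Polynomial ℝ)
    (hP : IsONPolys (gjWeight a b c p) P)
    (hP' : IsONPolys (gjWeight (a + 1) (b + 1) (fun i => c i - 1) p) P')
    (ρ ρhat : Polynomial ℝ)
    (hρ : ρ = ∏ i, p i)
    (hρhat : ρhat = ∑ i, Polynomial.C (c i) * Polynomial.derivative (p i) *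
      ∏ l ∈ Finset.univ.erase i, p l)
    (D : ℕ) (hD : D = ρ.natDegree)
    (L : Polynomial ℝ → Polynomial ℝ)
    (hL : ∀ f, L f = ρ * Polynomial.derivative f + ρhat * f) :
    (∀ f : Polynomial ℝ, (L f).natDegree ≤ f.natDegree + D - 1) ∧
    ∀ n m : ℕ, ¬(n ≤ m + 1 ∧ m + 1 ≤ n + D) →
      (∫ z in Set.Ioo (-1 : ℝ) 1,
        gjWeight (a + 1) (b + 1) (fun i => c i - 1) p z
          * (L (P n)).eval z * (P' m).eval z) = 0 := by
  have hpne : ∀ i, p i ≠ 0 := fun i h0 => by simpa [h0] using hp i 0 (by norm_num)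
  obtain rfl : L = gjDiffOp c p := funext fun f => by rw [hL, hρ, hρhat]; rfl
  subst hD hρ
  have hdeg (f : ℝ[X]) : (gjDiffOp c p f).degree < (f.natDegree + (∏ i, p i).natDegree : ℕ) :=
    degree_mul_derivative_add_mul_lt (Finset.prod_ne_zero_iff.2 fun i _ => hpne i)
      (degree_rhoHat_lt c hpne) f
  refine ⟨fun f => ?_, fun n m hnm => ?_⟩
  · rcases eq_or_ne (gjDiffOp c p f) 0 with h0 | h0
    · simp [h0]
    · have := (natDegree_lt_iff_degree_lt h0).2 (hdeg f)
      omega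
  rcases (by omega : m + 2 ≤ n ∨ n + (∏ i, p i).natDegree ≤ m) with hlow | hhigh
  · rw [integral_gjDiffOp_mul_eq_neg ha hb hp hP.integrableOn_weight hP'.integrableOn_weight,
      hP.integral_mul_eval_eq_zero_of_degree_lt, neg_zero]
    refine (degree_le_of_natDegree_le (natDegree_gjDiffOpAdjoint_le a b (P' m))).trans_lt ?_
    rw [hP'.natDegree_eq]
    exact_mod_cast hlow
  · refine hP'.integral_mul_eval_eq_zero_of_degree_lt ((hdeg (P n)).trans_le ?_)
    rw [hP.natDegree_eq]
    exact_mod_cast hhigh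
end

section
/- Assume additionally a, b > 0. Set ρ(z) = ∏ᵢ pᵢ(z), ρ̂(z) = Σᵢ cᵢ pᵢ′(z) ∏_{l≠i} p_l(z), D = deg ρ, and define the operator (Mf)(z) = ρ(z)[ (−a(1+z) + b(1−z)) f(z) + (1−z²) f′(z) ] + ρ̂(z)(1−z²) f(z). Write c−1⃗ for the exponent vector (c₁−1, …, c_N−1). Then M is banded with bandwidth D+1 in the generalized Jacobi hierarchy: ∫_{−1}^{1} w^{(a−1,b−1,c−1⃗)}(z) · (M P_n^{(a,b,c)})(z) · P_m^{(a−1,b−1,c−1⃗)}(z) dz = 0 unless n+1 ≤ m ≤ n+1+D. -/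
open MeasureTheory Polynomial

/-!
Differentiating the weight gives `(w^{(a,b,c)} f)' = w^{(a-1,b-1,c-1)} · M f` on `(-1,1)`,
and for `a, b > 0` the function `w^{(a,b,c)} f g` vanishes at `±1`. Integrating by parts, `M` is
minus the adjoint of differentiation: `⟨M f, g⟩_{(a-1,b-1,c-1)} = -⟨f, g'⟩_{(a,b,c)}`. For `m ≤ n`
the entry is therefore `-⟨P_n, (P'_m)'⟩_{(a,b,c)} = 0`, since `deg (P'_m)' < n`; for
`m > n + 1 + D` it vanishes because `deg (M P_n) ≤ n + 1 + D < m`.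
-/

open Set Finset

theorem HasDerivAt.finsetProd_of_logDeriv {𝕜 ι : Type*} [NontriviallyNormedField 𝕜]
    [DecidableEq ι] {u : Finset ι} {f : ι → 𝕜 → 𝕜} {ℓ : ι → 𝕜} {x : 𝕜}
    (hf : ∀ i ∈ u, HasDerivAt (f i) (f i x * ℓ i) x) :
    HasDerivAt (∏ i ∈ u, f i ·) ((∏ i ∈ u, f i x) * ∑ i ∈ u, ℓ i) x := by
  refine (HasDerivAt.fun_finsetProd hf).congr_deriv ?_
  rw [Finset.mul_sum]
  refine Finset.sum_congr rfl fun i hi => ?_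
  rw [smul_eq_mul, ← mul_assoc, Finset.prod_erase_mul _ _ hi]

theorem HasDerivAt.rpow_const_of_pos {g : ℝ → ℝ} {g' x : ℝ} (hg : HasDerivAt g g' x)
    (hx : 0 < g x) (e : ℝ) :
    HasDerivAt (fun t => g t ^ e) (g x ^ e * (e * g' / g x)) x := by
  convert hg.rpow_const (p := e) (Or.inl hx.ne') using 1
  rw [Real.rpow_sub_one hx.ne']
  ring

theorem integrableOn_one_sub_rpow_mul_one_add_rpow {α β : ℝ} (hα : -1 < α) (hβ : -1 < β) :
    IntegrableOn (fun z : ℝ => (1 - z) ^ α * (1 + z) ^ β) (Icc (-1) 1) := by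
  have hleft : IntegrableOn (fun z : ℝ => (1 + z) ^ β) (Icc (-1) 0) := by
    have h := (intervalIntegral.intervalIntegrable_rpow' (a := 0) (b := 1) hβ).comp_add_left 1
    rw [intervalIntegrable_iff_integrableOn_Icc_of_le (by norm_num)] at h
    simpa using h
  have hright : IntegrableOn (fun z : ℝ => (1 - z) ^ α) (Icc 0 1) := by
    have h :=
      ((intervalIntegral.intervalIntegrable_rpow' (a := 0) (b := 1) hα).comp_sub_left 1).symm
    rw [intervalIntegrable_iff_integrableOn_Icc_of_le (by norm_num)] at h
    simpa using h
  rw [← Icc_union_Icc_eq_Icc (by norm_num : (-1 : ℝ) ≤ 0) zero_le_one]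
  refine IntegrableOn.union ?_ ?_
  · refine (hleft.mul_continuousOn (g' := fun z => (1 - z) ^ α) ?_ isCompact_Icc).congr_fun
      (fun z _ => mul_comm _ _) measurableSet_Icc
    exact (continuousOn_const.sub continuousOn_id).rpow_const
      fun z hz => Or.inl (by simp only [Pi.sub_apply, id]; linarith [hz.2])
  · exact hright.mul_continuousOn ((continuousOn_const.add continuousOn_id).rpow_const
      fun z hz => Or.inl (by simp only [Pi.add_apply, id]; linarith [hz.1])) isCompact_Icc

theorem Polynomial.natDegree_mul_derivative_le {R : Type*} [Semiring R] (q f : R[X]) :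
    (q * derivative f).natDegree ≤ q.natDegree + f.natDegree - 1 := by
  rcases eq_or_ne f.natDegree 0 with hf | hf
  · simp [derivative_of_natDegree_zero hf]
  · have := natDegree_derivative_le f
    exact natDegree_mul_le.trans (by omega)

section Weight

variable {N : ℕ} (c : Fin N → ℝ) (p : Fin N → ℝ[X])

noncomputable def gjRho : ℝ[X] := ∏ i, p i

noncomputable def gjRhoHat : ℝ[X] :=
  ∑ i, C (c i) * derivative (p i) * ∏ l ∈ univ.erase i, p l

noncomputable def gjWeightedDeriv (a b : ℝ) (f : ℝ[X]) : ℝ[X] :=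
  gjRho p * ((C (-a) * (1 + X) + C b * (1 - X)) * f + (1 - X ^ 2) * derivative f)
    + gjRhoHat c p * ((1 - X ^ 2) * f)

theorem gjWeightedDeriv_mul (a b : ℝ) (f g : ℝ[X]) :
    gjWeightedDeriv c p a b (f * g)
      = gjWeightedDeriv c p a b f * g + gjRho p * (1 - X ^ 2) * f * derivative g := by
  simp only [gjWeightedDeriv, derivative_mul]
  ring

theorem gjRhoHat_mul (h : ℝ[X]) :
    gjRhoHat c p * h = ∑ i, (C (c i) * h * ∏ l ∈ univ.erase i, p l) * derivative (p i) := by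
  rw [gjRhoHat, Finset.sum_mul]
  exact Finset.sum_congr rfl fun i _ => by ring

variable {c p} {z : ℝ}

theorem eval_gjRhoHat (hpz : ∀ i, (p i).eval z ≠ 0) :
    (gjRhoHat c p).eval z
      = (gjRho p).eval z * ∑ i, c i * (derivative (p i)).eval z / (p i).eval z := by
  simp only [gjRhoHat, gjRho, eval_finsetSum, eval_mul, eval_C, eval_prod, Finset.mul_sum]
  refine Finset.sum_congr rfl fun i _ => ?_
  rw [← Finset.mul_prod_erase _ _ (Finset.mem_univ i)]
  field_simp [hpz i]

theorem gjWeight_eq_gjWeight_sub_one_mul (a b : ℝ) (hz : z ∈ Ioo (-1 : ℝ) 1)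
    (hpz : ∀ i, 0 < (p i).eval z) :
    gjWeight a b c p z
      = gjWeight (a - 1) (b - 1) (fun i => c i - 1) p z * ((1 - z ^ 2) * (gjRho p).eval z) := by
  have h1 : 1 - z ≠ 0 := by linarith [hz.2]
  have h2 : 1 + z ≠ 0 := by linarith [hz.1]
  simp only [gjWeight, gjRho, eval_prod, Real.rpow_sub_one h1, Real.rpow_sub_one h2,
    Real.rpow_sub_one (hpz _).ne', Finset.prod_div_distrib]
  field_simp [Finset.prod_ne_zero_iff.mpr fun i _ => (hpz i).ne']
  ring

theorem hasDerivAt_gjWeight (a b : ℝ) (hz : z ∈ Ioo (-1 : ℝ) 1)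
    (hpz : ∀ i, 0 < (p i).eval z) :
    HasDerivAt (gjWeight a b c p) (gjWeight a b c p z *
      (-a / (1 - z) + b / (1 + z)
        + ∑ i, c i * (derivative (p i)).eval z / (p i).eval z)) z := by
  have hA := ((hasDerivAt_id' z).const_sub 1).rpow_const_of_pos (sub_pos.mpr hz.2) a
  have hB := ((hasDerivAt_id' z).const_add 1).rpow_const_of_pos (neg_lt_iff_pos_add'.mp hz.1) b
  have hC := HasDerivAt.finsetProd_of_logDeriv (u := univ)
    fun i _ => ((p i).hasDerivAt z).rpow_const_of_pos (hpz i) (c i)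
  refine ((hA.mul hB).mul hC).congr_deriv ?_
  simp only [gjWeight, Pi.mul_apply]
  ring

theorem hasDerivAt_gjWeight_mul_eval (a b : ℝ) (f : ℝ[X]) (hz : z ∈ Ioo (-1 : ℝ) 1)
    (hpz : ∀ i, 0 < (p i).eval z) :
    HasDerivAt (fun t => gjWeight a b c p t * f.eval t)
      (gjWeight (a - 1) (b - 1) (fun i => c i - 1) p z * (gjWeightedDeriv c p a b f).eval z) z := by
  refine ((hasDerivAt_gjWeight a b hz hpz).mul (f.hasDerivAt z)).congr_deriv ?_
  have h1 : 1 - z ≠ 0 := by linarith [hz.2]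
  have h2 : 1 + z ≠ 0 := by linarith [hz.1]
  rw [gjWeight_eq_gjWeight_sub_one_mul a b hz hpz]
  simp only [gjWeightedDeriv, eval_add, eval_mul, eval_sub, eval_pow, eval_one, eval_X, eval_C,
    eval_gjRhoHat fun i => (hpz i).ne']
  field_simp
  ring

theorem continuousOn_prod_eval_rpow {s : Set ℝ} (hp : ∀ i, ∀ z ∈ s, 0 < (p i).eval z)
    (e : Fin N → ℝ) : ContinuousOn (fun z => ∏ i, (p i).eval z ^ e i) s :=
  continuousOn_finsetProd _ fun i _ =>
    (p i).continuous.continuousOn.rpow_const fun z hz => Or.inl (hp i z hz).ne'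

theorem continuousOn_gjWeight {a b : ℝ} (ha : 0 ≤ a) (hb : 0 ≤ b) {s : Set ℝ}
    (hp : ∀ i, ∀ z ∈ s, 0 < (p i).eval z) : ContinuousOn (gjWeight a b c p) s :=
  (((continuous_const.sub continuous_id).rpow_const fun _ => Or.inr ha).continuousOn.mul
    ((continuous_const.add continuous_id).rpow_const fun _ => Or.inr hb).continuousOn).mul
    (continuousOn_prod_eval_rpow hp c)

theorem integrableOn_gjWeight_mul_eval_mul_eval {a b : ℝ} (ha : -1 < a) (hb : -1 < b)
    (hp : ∀ i, ∀ z ∈ Icc (-1 : ℝ) 1, 0 < (p i).eval z) (f g : ℝ[X]) :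
    IntegrableOn (fun z => gjWeight a b c p z * f.eval z * g.eval z) (Ioo (-1) 1) := by
  have hcont : ContinuousOn (fun z => (∏ i, (p i).eval z ^ c i) * f.eval z * g.eval z)
      (Icc (-1) 1) :=
    ((continuousOn_prod_eval_rpow hp c).mul f.continuous.continuousOn).mul
      g.continuous.continuousOn
  refine (((integrableOn_one_sub_rpow_mul_one_add_rpow ha hb).mul_continuousOn hcont
    isCompact_Icc).mono_set Ioo_subset_Icc_self).congr_fun (fun z _ => ?_) measurableSet_Ioo
  simp only [gjWeight]
  ring

theorem integral_gjWeight_gjWeightedDeriv_mul_eq_neg {a b : ℝ} (ha : 0 < a) (hb : 0 < b)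
    (hp : ∀ i, ∀ z ∈ Icc (-1 : ℝ) 1, 0 < (p i).eval z) (f g : ℝ[X]) :
    ∫ z in Ioo (-1 : ℝ) 1,
        gjWeight (a - 1) (b - 1) (fun i => c i - 1) p z * (gjWeightedDeriv c p a b f).eval z
          * g.eval z
      = -∫ z in Ioo (-1 : ℝ) 1, gjWeight a b c p z * (derivative g).eval z * f.eval z := by
  set F := fun t => gjWeight a b c p t * (f * g).eval t with hF
  have hderiv : ∀ z ∈ Ioo (-1 : ℝ) 1, HasDerivAt F
      (gjWeight (a - 1) (b - 1) (fun i => c i - 1) p z * (gjWeightedDeriv c p a b f).eval z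
          * g.eval z + gjWeight a b c p z * (derivative g).eval z * f.eval z) z := by
    intro z hz
    have hpz i : 0 < (p i).eval z := hp i z (Ioo_subset_Icc_self hz)
    refine (hasDerivAt_gjWeight_mul_eval a b (f * g) hz hpz).congr_deriv ?_
    rw [gjWeightedDeriv_mul, gjWeight_eq_gjWeight_sub_one_mul a b hz hpz]
    simp only [eval_add, eval_mul, eval_sub, eval_pow, eval_one, eval_X]
    ring
  have hcont : ContinuousOn F (Icc (-1) 1) :=
    (continuousOn_gjWeight ha.le hb.le hp).mul (f * g).continuous.continuousOn
  have hint₁ := integrableOn_gjWeight_mul_eval_mul_eval (c := fun i => c i - 1)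
    (by linarith : -1 < a - 1) (by linarith : -1 < b - 1) hp (gjWeightedDeriv c p a b f) g
  have hint₂ := integrableOn_gjWeight_mul_eval_mul_eval (c := c)
    (by linarith : -1 < a) (by linarith : -1 < b) hp (derivative g) f
  have hFTC := intervalIntegral.integral_eq_sub_of_hasDerivAt_of_le (by norm_num) hcont hderiv
    ((intervalIntegrable_iff_integrableOn_Ioo_of_le (by norm_num)).mpr (hint₁.add hint₂))
  rw [intervalIntegral.integral_of_le (by norm_num), integral_Ioc_eq_integral_Ioo,
    integral_add hint₁ hint₂] at hFTC
  have hFone : F 1 = 0 := by simp [hF, gjWeight, Real.zero_rpow ha.ne']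
  have hFneg : F (-1) = 0 := by simp [hF, gjWeight, Real.zero_rpow hb.ne']
  rw [hFone, hFneg, sub_zero] at hFTC
  exact eq_neg_of_add_eq_zero_left hFTC

theorem natDegree_gjWeightedDeriv_le (hp : ∀ i, p i ≠ 0) (a b : ℝ) (f : ℝ[X]) :
    (gjWeightedDeriv c p a b f).natDegree ≤ f.natDegree + 1 + (gjRho p).natDegree := by
  set n := f.natDegree
  set D := (gjRho p).natDegree
  have hsplit i : (∏ l ∈ univ.erase i, p l).natDegree + (p i).natDegree = D := by
    rw [← natDegree_mul (prod_ne_zero_iff.mpr fun l _ => hp l) (hp i),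
      prod_erase_mul _ _ (mem_univ i)]
    rfl
  have hX : (1 - X ^ 2 : ℝ[X]).natDegree ≤ 2 := by compute_degree
  have haff : (C (-a) * (1 + X) + C b * (1 - X)).natDegree ≤ 1 := by compute_degree
  rw [gjWeightedDeriv, gjRhoHat_mul, mul_add]
  refine natDegree_add_le_of_degree_le (natDegree_add_le_of_degree_le ?_ ?_)
    (natDegree_sum_le_of_forall_le _ _ fun i _ => ?_)
  · rw [← mul_assoc]
    exact natDegree_mul_le_of_le (natDegree_mul_le_of_le le_rfl haff) le_rfl |>.trans (by omega)
  · rw [← mul_assoc]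
    refine (natDegree_mul_derivative_le _ f).trans ?_
    have := natDegree_mul_le_of_le (le_refl D) hX
    omega
  · refine (natDegree_mul_derivative_le _ _).trans ?_
    have := natDegree_mul_le_of_le
      ((natDegree_C_mul_le (c i) _).trans (natDegree_mul_le_of_le hX (le_refl n)))
      (le_refl (∏ l ∈ univ.erase i, p l).natDegree)
    have := hsplit i
    omega

end Weight

theorem IsONPolys.integral_mul_eq_zero_of_degree_lt {w : ℝ → ℝ} {P : ℕ → ℝ[X]}
    (hP : IsONPolys w P)
    (hw : ∀ f g : ℝ[X], IntegrableOn (fun z => w z * f.eval z * g.eval z) (Ioo (-1) 1))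
    {q : ℝ[X]} {m : ℕ} (hq : q.degree < m) :
    ∫ z in Ioo (-1 : ℝ) 1, w z * q.eval z * (P m).eval z = 0 := by
  obtain ⟨hdeg, hlc, horth⟩ := hP
  let S : Sequence ℝ := ⟨P, hdeg⟩
  have hmem : q ∈ Submodule.span ℝ (S '' Set.Iio m) := by
    rwa [S.span_degreeLT fun i _ => (hlc i).ne'.isUnit, mem_degreeLT]
  clear hq
  induction hmem using Submodule.span_induction with
  | mem f hf =>
    obtain ⟨k, hk, rfl⟩ := hf
    exact (horth k m).trans (if_neg (ne_of_lt hk))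
  | zero => simp
  | add f g _ _ hf hg =>
    simp only [eval_add, mul_add, add_mul]
    rw [integral_add (hw f (P m)) (hw g (P m)), hf, hg, add_zero]
  | smul r f _ hf =>
    simp only [eval_smul, smul_eq_mul, mul_left_comm _ r, mul_assoc] at hf ⊢
    rw [integral_const_mul, hf, mul_zero]

theorem statement10_general (a b : ℝ) (ha0 : 0 < a) (hb0 : 0 < b)
    (N : ℕ) (c : Fin N → ℝ)
    (p : Fin N → Polynomial ℝ) (hp : ∀ i, ∀ z ∈ Set.Icc (-1 : ℝ) 1, 0 < (p i).eval z)
    (P P' : ℕ → Polynomial ℝ)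
    (hP : IsONPolys (gjWeight a b c p) P)
    (hP' : IsONPolys (gjWeight (a - 1) (b - 1) (fun i => c i - 1) p) P')
    (ρ ρhat : Polynomial ℝ)
    (hρ : ρ = ∏ i, p i)
    (hρhat : ρhat = ∑ i, Polynomial.C (c i) * Polynomial.derivative (p i) *
      ∏ l ∈ Finset.univ.erase i, p l)
    (D : ℕ) (hD : D = ρ.natDegree)
    (M : Polynomial ℝ → Polynomial ℝ)
    (hM : ∀ f, M f =
      ρ * ((Polynomial.C (-a) * (1 + Polynomial.X) + Polynomial.C b * (1 - Polynomial.X)) * f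
          + (1 - Polynomial.X ^ 2) * Polynomial.derivative f)
        + ρhat * ((1 - Polynomial.X ^ 2) * f)) :
    ∀ n m : ℕ, ¬(n + 1 ≤ m ∧ m ≤ n + 1 + D) →
      (∫ z in Set.Ioo (-1 : ℝ) 1,
        gjWeight (a - 1) (b - 1) (fun i => c i - 1) p z
          * (M (P n)).eval z * (P' m).eval z) = 0 := by
  intro n m hnm
  obtain rfl : M = gjWeightedDeriv c p a b := funext fun f => by
    rw [hM, hρ, hρhat]; rfl
  obtain rfl : D = (gjRho p).natDegree := by rw [hD, hρ, gjRho]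
  rcases Nat.lt_or_ge n m with hlt | hle
  · have hp0 i : p i ≠ 0 := fun h => by simpa [h] using hp i 0 (by norm_num)
    have hdeg := natDegree_gjWeightedDeriv_le (c := c) hp0 a b (P n)
    rw [natDegree_eq_of_degree_eq_some (hP.1 n)] at hdeg
    refine hP'.integral_mul_eq_zero_of_degree_lt
      (integrableOn_gjWeight_mul_eval_mul_eval (by linarith) (by linarith) hp) ?_
    have hdeg_lt : (gjWeightedDeriv c p a b (P n)).natDegree < m := by omega
    exact degree_le_natDegree.trans_lt (by exact_mod_cast hdeg_lt)
  · rw [integral_gjWeight_gjWeightedDeriv_mul_eq_neg ha0 hb0 hp, neg_eq_zero]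
    refine hP.integral_mul_eq_zero_of_degree_lt
      (integrableOn_gjWeight_mul_eval_mul_eval (by linarith) (by linarith) hp) ?_
    calc (derivative (P' m)).degree < (P' m).degree := degree_derivative_lt fun h => by
          simpa [h] using hP'.1 m
      _ ≤ n := by rw [hP'.1 m]; exact_mod_cast hle

/-- The adjoint-type operator
`M f = ρ [(-a(1+z) + b(1-z)) f + (1-z²) f'] + ρ̂ (1-z²) f` is banded with bandwidth `D+1`
from the `(a,b,c)` basis to the `(a-1,b-1,c-1⃗)` basis:  its matrix entries vanish unless
`n+1 ≤ m ≤ n+1+D`. -/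
theorem statement10 (a b : ℝ) (ha : -1 < a) (hb : -1 < b) (ha0 : 0 < a) (hb0 : 0 < b)
    (N : ℕ) (c : Fin N → ℝ)
    (p : Fin N → Polynomial ℝ) (hp : ∀ i, ∀ z ∈ Set.Icc (-1 : ℝ) 1, 0 < (p i).eval z)
    (P P' : ℕ → Polynomial ℝ)
    (hP : IsONPolys (gjWeight a b c p) P)
    (hP' : IsONPolys (gjWeight (a - 1) (b - 1) (fun i => c i - 1) p) P')
    (ρ ρhat : Polynomial ℝ)
    (hρ : ρ = ∏ i, p i)
    (hρhat : ρhat = ∑ i, Polynomial.C (c i) * Polynomial.derivative (p i) *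
      ∏ l ∈ Finset.univ.erase i, p l)
    (D : ℕ) (hD : D = ρ.natDegree)
    (M : Polynomial ℝ → Polynomial ℝ)
    (hM : ∀ f, M f =
      ρ * ((Polynomial.C (-a) * (1 + Polynomial.X) + Polynomial.C b * (1 - Polynomial.X)) * f
          + (1 - Polynomial.X ^ 2) * Polynomial.derivative f)
        + ρhat * ((1 - Polynomial.X ^ 2) * f)) :
    ∀ n m : ℕ, ¬(n + 1 ≤ m ∧ m ≤ n + 1 + D) →
      (∫ z in Set.Ioo (-1 : ℝ) 1,
        gjWeight (a - 1) (b - 1) (fun i => c i - 1) p z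
          * (M (P n)).eval z * (P' m).eval z) = 0 :=
  statement10_general a b ha0 hb0 N c p hp P P' hP hP' ρ ρhat hρ hρhat D hD M hM
end
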